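/- arXiv:2204.12599 — 2 statements merged into one kernel-verified Lean document; each statement's English description precedes it below -/
import Mathlib

section
/- For any peak Λ ≤ 1/2, in any swap Schelling game (G,b,Λ), no profitable swap can occur between two agents that are both below the peak (i.e., if agents i and j both satisfy f_i(σ) < Λ and f_j(σ) < Λ in a strategy profile σ, then the swap of i and j is not profitable). -/
open Finset

namespace SwapSchelling

variable {V : Type*} [Fintype V] [DecidableEq V]

open scoped Classical in
/-- The closed neighborhood `N[v]` of a node `v` in `G`, as a `Finset`. -/
noncomputable def closedNbhd (G : SimpleGraph V) (v : V) : Finset V :=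
  univ.filter (fun u => u = v ∨ G.Adj v u)

open scoped Classical in
/-- The degree `δ(v)` of a node `v` in `G`. -/
noncomputable def deg (G : SimpleGraph V) (v : V) : ℕ :=
  (univ.filter (fun u => G.Adj v u)).card

/-- The maximum degree `Δ(G)`. -/
noncomputable def maxDeg (G : SimpleGraph V) : ℕ := univ.sup (deg G)

/-- The minimum degree `δ(G)`. -/
noncomputable def minDeg (G : SimpleGraph V) : ℕ := sInf (Set.range (deg G))

open scoped Classical in
/-- `frac G c v` is the fraction of nodes in the closed neighborhood of `v` that have
the same color as `v` (that is, `f_i(σ)` for the agent `i` occupying node `v`). -/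
noncomputable def frac (G : SimpleGraph V) (c : V → Bool) (v : V) : ℝ :=
  (((closedNbhd G v).filter (fun u => c u = c v)).card : ℝ) / ((closedNbhd G v).card : ℝ)

/-- The coloring obtained from `c` after the agents on nodes `v` and `w` swap positions. -/
def swapColor (c : V → Bool) (v w : V) : V → Bool := c ∘ Equiv.swap v w

/-- A single-peaked utility function `p` with peak at `Λ`: `p 0 = 0`, `p` is strictly
increasing on `[0,Λ]`, `p Λ = 1`, and `p x = p (Λ(1-x)/(1-Λ))` for `x ∈ [Λ,1]`. -/
structure IsSinglePeaked (p : ℝ → ℝ) (Λ : ℝ) : Prop where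
  peak_mem : Λ ∈ Set.Ioo (0 : ℝ) 1
  map_zero : p 0 = 0
  strictMonoOn : StrictMonoOn p (Set.Icc 0 Λ)
  map_peak : p Λ = 1
  symm : ∀ x ∈ Set.Icc Λ 1, p x = p (Λ * (1 - x) / (1 - Λ))

/-- A strategy profile: a 2-coloring of the nodes with exactly `b` blue (`true`) nodes. -/
def IsProfile (c : V → Bool) (b : ℕ) : Prop :=
  (univ.filter (fun v => c v = true)).card = b

/-- The structural data of a swap Schelling game `(G, b, Λ)` with utility function `p`:
`G` is connected, there are `b` blue agents with `1 ≤ b ≤ n/2`, and `p` is a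
single-peaked utility function with peak `Λ`. -/
structure IsGame (G : SimpleGraph V) (b : ℕ) (Λ : ℝ) (p : ℝ → ℝ) : Prop where
  connected : G.Connected
  one_le_b : 1 ≤ b
  b_le_half : 2 * b ≤ Fintype.card V
  singlePeaked : IsSinglePeaked p Λ

/-- The swap of the two (differently colored) agents occupying nodes `v` and `w`
is profitable: both agents strictly increase their utility. -/
def ProfitableSwap (G : SimpleGraph V) (p : ℝ → ℝ) (c : V → Bool) (v w : V) : Prop :=
  c v ≠ c w ∧
  p (frac G (swapColor c v w) w) > p (frac G c v) ∧
  p (frac G (swapColor c v w) v) > p (frac G c w)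

/-- A swap equilibrium: no profitable swap exists. -/
def IsSwapEquilibrium (G : SimpleGraph V) (p : ℝ → ℝ) (c : V → Bool) : Prop :=
  ∀ v w, ¬ ProfitableSwap G p c v w

open scoped Classical in
/-- The degree of integration: the number of non-segregated agents. -/
noncomputable def DoI (G : SimpleGraph V) (c : V → Bool) : ℕ :=
  (univ.filter (fun v => frac G c v ≠ 1)).card

open scoped Classical in
/-- The number of monochromatic edges of `G` under the coloring `c`. -/
noncomputable def Phi (G : SimpleGraph V) (c : V → Bool) : ℕ :=
  (G.edgeFinset.filter (fun e => ∀ u ∈ e, ∀ w ∈ e, c u = c w)).card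

open scoped Classical in
/-- The number of edges of `G`. -/
noncomputable def numEdges (G : SimpleGraph V) : ℕ :=
  (univ.filter (fun e : Sym2 V => e ∈ G.edgeSet)).card

/-- A finset of nodes is an independent set of `G`. -/
def IsIndepSet (G : SimpleGraph V) (s : Finset V) : Prop :=
  ∀ u ∈ s, ∀ w ∈ s, ¬ G.Adj u w

open scoped Classical in
/-- The independence number `α(G)`. -/
noncomputable def indepNum (G : SimpleGraph V) : ℕ :=
  univ.sup (fun s : Finset V => if IsIndepSet G s then s.card else 0)

open scoped Classical in
/-- The degree of `v` inside the subgraph of `G` induced by the node set `s`. -/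
noncomputable def degOn (G : SimpleGraph V) (s : Finset V) (v : V) : ℕ :=
  (s.filter (fun u => G.Adj v u)).card


/-!
Moving into a node `w` of the other color, an agent finds at least the `1 - f_w` share of
`N[w]` that disagreed with the previous occupant of `w`. For `f_w < Λ ≤ 1/2` this lands
above the peak, where the symmetry of `p` and `Λ / (1 - Λ) ≤ 1` make the new utility at most
`p f_w`. So a profitable swap of two agents below the peak forces `f_v < f_w` and `f_w < f_v`.
-/

section Fractions

variable (G : SimpleGraph V)

lemma mem_closedNbhd_self (v : V) : v ∈ closedNbhd G v := by
  simp [closedNbhd]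

lemma frac_nonneg (c : V → Bool) (v : V) : 0 ≤ frac G c v := by
  unfold frac
  positivity

lemma frac_le_one (c : V → Bool) (v : V) : frac G c v ≤ 1 :=
  div_le_one_of_le₀ (mod_cast card_filter_le _ _) (Nat.cast_nonneg _)

/-- `Equiv.swap v w` injects the nodes of `N[w]` colored differently from `w` into those
sharing the color that `w` has after the swap. -/
lemma card_filter_ne_le_card_filter_swapColor {c : V → Bool} {v w : V} (hvw : c v ≠ c w) :
    #((closedNbhd G w).filter (fun u => ¬c u = c w)) ≤
      #((closedNbhd G w).filter (fun u => swapColor c v w u = swapColor c v w w)) := by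
  refine card_le_card_of_injOn (Equiv.swap v w) (fun u hu => ?_) (Equiv.injective _).injOn
  obtain ⟨hu, hcu⟩ := mem_filter.1 (mem_coe.1 hu)
  have hu_ne_w : u ≠ w := by rintro rfl; exact hcu rfl
  have hcuv : c u = c v := by revert hcu hvw; cases c u <;> cases c v <;> cases c w <;> simp
  refine mem_filter.2 ⟨?_, ?_⟩
  · by_cases huv : u = v
    · simpa [huv] using mem_closedNbhd_self G w
    · rwa [Equiv.swap_apply_of_ne_of_ne huv hu_ne_w]
  · simp [swapColor, hcuv]

lemma one_sub_frac_le_frac_swapColor {c : V → Bool} {v w : V} (hvw : c v ≠ c w) :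
    1 - frac G c w ≤ frac G (swapColor c v w) w := by
  have hpos : (0 : ℝ) < #(closedNbhd G w) := mod_cast card_pos.2 ⟨w, mem_closedNbhd_self G w⟩
  have hsplit := card_filter_add_card_filter_not (s := closedNbhd G w) (fun u => c u = c w)
  have hle := card_filter_ne_le_card_filter_swapColor G hvw
  unfold frac
  rw [sub_le_iff_le_add, ← add_div, le_div_iff₀ hpos, one_mul]
  exact_mod_cast hsplit.symm.le.trans (by omega)

end Fractions

namespace IsSinglePeaked

variable {p : ℝ → ℝ} {Λ : ℝ}

/-- For `Λ ≤ 1/2`, the reflection `z ↦ Λ (1 - z) / (1 - Λ)` sends `[1 - y, 1]` into `[0, y]`. -/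
lemma apply_le_of_one_sub_le (hp : IsSinglePeaked p Λ) (hΛ : Λ ≤ 1 / 2) {y z : ℝ}
    (hy : y ∈ Set.Icc 0 Λ) (hyz : 1 - y ≤ z) (hz : z ≤ 1) : p z ≤ p y := by
  obtain ⟨hΛ0, hΛ1⟩ := hp.peak_mem
  have hΛ' : 0 < 1 - Λ := by linarith
  have hreflect_nonneg : 0 ≤ Λ * (1 - z) / (1 - Λ) := by
    apply div_nonneg _ hΛ'.le
    nlinarith
  have hreflect_le : Λ * (1 - z) / (1 - Λ) ≤ y := by
    rw [div_le_iff₀ hΛ']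
    nlinarith [hy.1]
  rw [hp.symm z ⟨by linarith [hy.2], hz⟩]
  exact hp.strictMonoOn.monotoneOn ⟨hreflect_nonneg, hreflect_le.trans hy.2⟩ hy hreflect_le

end IsSinglePeaked

lemma frac_lt_of_swap_improves {G : SimpleGraph V} {p : ℝ → ℝ} {Λ : ℝ}
    (hp : IsSinglePeaked p Λ) (hΛ : Λ ≤ 1 / 2) {c : V → Bool} {v w : V} (hvw : c v ≠ c w)
    (hv : frac G c v ≤ Λ) (hw : frac G c w ≤ Λ)
    (himp : p (frac G c v) < p (frac G (swapColor c v w) w)) :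
    frac G c v < frac G c w := by
  have hv_mem : frac G c v ∈ Set.Icc 0 Λ := ⟨frac_nonneg G c v, hv⟩
  have hw_mem : frac G c w ∈ Set.Icc 0 Λ := ⟨frac_nonneg G c w, hw⟩
  have hnew : p (frac G (swapColor c v w) w) ≤ p (frac G c w) :=
    hp.apply_le_of_one_sub_le hΛ hw_mem (one_sub_frac_le_frac_swapColor G hvw)
      (frac_le_one G _ w)
  exact (hp.strictMonoOn.lt_iff_lt hv_mem hw_mem).1 (himp.trans_le hnew)

theorem no_profitable_swap_below_peak_general
    {V : Type*} [Fintype V] [DecidableEq V] (G : SimpleGraph V) (b : ℕ) (Λ : ℝ) (p : ℝ → ℝ)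
    (hgame : IsGame G b Λ p) (hΛ : Λ ≤ 1 / 2)
    (c : V → Bool) (v w : V)
    (hv : frac G c v < Λ) (hw : frac G c w < Λ) :
    ¬ ProfitableSwap G p c v w := by
  rintro ⟨hvw, hgain_v, hgain_w⟩
  have hp := hgame.singlePeaked
  have hvw_lt := frac_lt_of_swap_improves hp hΛ hvw hv.le hw.le hgain_v
  have hwv_lt := frac_lt_of_swap_improves hp hΛ hvw.symm hw.le hv.le
    (by simpa only [swapColor, Equiv.swap_comm] using hgain_w)
  exact hvw_lt.not_gt hwv_lt

/-- For any peak `Λ ≤ 1/2`, in any swap Schelling game `(G,b,Λ)`, no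
profitable swap can occur between two agents that are both below the peak. -/
theorem no_profitable_swap_below_peak
    {V : Type*} [Fintype V] [DecidableEq V] (G : SimpleGraph V) (b : ℕ) (Λ : ℝ) (p : ℝ → ℝ)
    (hgame : IsGame G b Λ p) (hΛ : Λ ≤ 1 / 2)
    (c : V → Bool) (hc : IsProfile c b) (v w : V)
    (hv : frac G c v < Λ) (hw : frac G c w < Λ) :
    ¬ ProfitableSwap G p c v w :=
  no_profitable_swap_below_peak_general G b Λ p hgame hΛ c v w hv hw

end SwapSchelling
end

section
/- For any peak Λ > 1/2, the swap Schelling game played on the cycle graph with 6 nodes with b = 3 blue agents and 3 red agents admits no swap equilibrium. -/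
/-!
On the six-cycle every closed neighborhood has three nodes, so an agent's fraction is `1/3`, `2/3`
or `1`. For `Λ > 1/2` single-peakedness orders the utilities as `p 1 = 0 < p (1/3) < p (2/3)`:
the mirror image `Λ / (3 (1 - Λ))` of `2/3` exceeds `1/3`. In every profile with three agents of
each color, some swap moves both agents either from `1` to `1/3` or from `1/3` to `2/3`.
-/

open Finset

namespace SwapSchelling

variable {V : Type*} [Fintype V] [DecidableEq V]

namespace IsSinglePeaked

variable {p : ℝ → ℝ} {Λ x y : ℝ}

theorem map_one (hp : IsSinglePeaked p Λ) : p 1 = 0 := by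
  simpa [hp.map_zero] using hp.symm 1 ⟨hp.peak_mem.2.le, le_rfl⟩

theorem map_pos (hp : IsSinglePeaked p Λ) (hx : 0 < x) (hxΛ : x ≤ Λ) : 0 < p x :=
  hp.map_zero ▸ hp.strictMonoOn ⟨le_rfl, hp.peak_mem.1.le⟩ ⟨hx.le, hxΛ⟩ hx

/-- Past the peak, `y` is compared with `x` through its mirror image `Λ (1 - y) / (1 - Λ)`. -/
theorem map_lt_map (hp : IsSinglePeaked p Λ) (hx : 0 ≤ x) (hxΛ : x ≤ Λ) (hxy : x < y)
    (hy : y ≤ 1) (hmirror : x * (1 - Λ) < Λ * (1 - y)) : p x < p y := by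
  rcases le_or_gt y Λ with hyΛ | hΛy
  · exact hp.strictMonoOn ⟨hx, hxΛ⟩ ⟨hx.trans hxy.le, hyΛ⟩ hxy
  have hΛ1 : 0 < 1 - Λ := sub_pos.2 hp.peak_mem.2
  have hx_lt : x < Λ * (1 - y) / (1 - Λ) := (lt_div_iff₀ hΛ1).2 hmirror
  have hle_Λ : Λ * (1 - y) / (1 - Λ) ≤ Λ :=
    (div_le_iff₀ hΛ1).2 (mul_le_mul_of_nonneg_left (by linarith) hp.peak_mem.1.le)
  rw [hp.symm y ⟨hΛy.le, hy⟩]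
  exact hp.strictMonoOn ⟨hx, hxΛ⟩ ⟨hx.trans hx_lt.le, hle_Λ⟩ hx_lt

theorem map_third_lt_map_two_thirds (hp : IsSinglePeaked p Λ) (hΛ : 1 / 2 < Λ) :
    p (1 / 3) < p (2 / 3) :=
  hp.map_lt_map (by norm_num) (by linarith) (by norm_num) (by norm_num) (by linarith)

end IsSinglePeaked

theorem closedNbhd_cycleGraph {n : ℕ} (v : Fin (n + 2)) :
    closedNbhd (SimpleGraph.cycleGraph (n + 2)) v = {v - 1, v, v + 1} := by
  ext u
  have hadj : (SimpleGraph.cycleGraph (n + 2)).Adj v u ↔ u = v - 1 ∨ u = v + 1 := by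
    rw [← SimpleGraph.mem_neighborSet, SimpleGraph.cycleGraph_neighborSet]
    rfl
  simp only [closedNbhd, mem_filter, mem_univ, true_and, hadj, mem_insert, mem_singleton]
  tauto

theorem card_closedNbhd_cycleGraph {n : ℕ} (v : Fin (n + 3)) :
    #(closedNbhd (SimpleGraph.cycleGraph (n + 3)) v) = 3 := by
  rw [closedNbhd_cycleGraph, card_eq_three]
  refine ⟨v - 1, v, v + 1, by simp, ?_, by simp, rfl⟩
  rw [Ne, sub_eq_iff_eq_add, add_assoc, left_eq_add, Fin.ext_iff]
  simp [Fin.val_add, Nat.mod_eq_of_lt (show 2 < n + 3 by omega)]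

def sameColorCount {n : ℕ} [NeZero n] (c : Fin n → Bool) (v : Fin n) : ℕ :=
  #{u ∈ ({v - 1, v, v + 1} : Finset (Fin n)) | c u = c v}

theorem frac_cycleGraph {n : ℕ} (c : Fin (n + 3) → Bool) (v : Fin (n + 3)) :
    frac (SimpleGraph.cycleGraph (n + 3)) c v = sameColorCount c v / 3 := by
  rw [frac, card_closedNbhd_cycleGraph, closedNbhd_cycleGraph, sameColorCount]
  congr 3

/-- Up to symmetry the profiles are `BBBRRR`, where the two agents in the middle of the blocks
swap, and `BBRBRR`, `BRBRBR`, where two adjacent agents without a same-colored neighbor swap. -/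
theorem exists_improving_swap_cycle_six (c : Fin 6 → Bool) (hc : IsProfile c 3) :
    ∃ v w, c v ≠ c w ∧
      (sameColorCount c v = 3 ∧ sameColorCount c w = 3 ∧
          sameColorCount (swapColor c v w) w = 1 ∧ sameColorCount (swapColor c v w) v = 1 ∨
        sameColorCount c v = 1 ∧ sameColorCount c w = 1 ∧
          sameColorCount (swapColor c v w) w = 2 ∧ sameColorCount (swapColor c v w) v = 2) := by
  unfold IsProfile at hc
  revert c
  decide

/-- For any peak `Λ > 1/2`, the swap Schelling game on the cycle with six
nodes with `b = 3` blue and `3` red agents admits no swap equilibrium. -/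
theorem no_swap_equilibrium_on_cycle_six
    (Λ : ℝ) (hΛ : 1 / 2 < Λ) (p : ℝ → ℝ) (hp : IsSinglePeaked p Λ)
    (c : Fin 6 → Bool) (hc : IsProfile c 3) :
    ¬ IsSwapEquilibrium (SimpleGraph.cycleGraph 6) p c := by
  have h_one_lt_third : p 1 < p (1 / 3) :=
    hp.map_one ▸ hp.map_pos (by norm_num) (by linarith)
  have h_third_lt_two_thirds := hp.map_third_lt_map_two_thirds hΛ
  obtain ⟨v, w, hvw, hcounts⟩ := exists_improving_swap_cycle_six c hc
  intro hse
  refine hse v w ⟨hvw, ?_⟩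
  simp only [frac_cycleGraph]
  rcases hcounts with ⟨hv, hw, hw', hv'⟩ | ⟨hv, hw, hw', hv'⟩
  · norm_num [hv, hw, hw', hv', h_one_lt_third]
  · norm_num [hv, hw, hw', hv', h_third_lt_two_thirds]

end SwapSchelling
end
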